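/- If G is an α_i-metric graph, then its interval thinness is at most i+1; that is, for all vertices u,v of G, every integer k with 0 ≤ k ≤ d(u,v), and all x,y ∈ S_k(u,v), one has d(x,y) ≤ i+1. -/

import Mathlib

/-- A graph `G` is `α_i`-metric if for all vertices `u, v, w, x` with `v ∈ I(u,w)`,
`w ∈ I(v,x)` and `v` adjacent to `w`, one has `d(u,x) ≥ d(u,v) + d(v,x) - i`. -/
def alphaMetric {V : Type*} (G : SimpleGraph V) (i : ℕ) : Prop :=
  ∀ u v w x : V,
    G.dist u v + G.dist v w = G.dist u w →
    G.dist v w + G.dist w x = G.dist v x →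
    G.Adj v w →
    G.dist u v + G.dist v x ≤ G.dist u x + i

/-- `x` belongs to the slice `S_k(u,v)`: it lies on a shortest `(u,v)`-path
at distance `k` from `u`. -/
def inSlice {V : Type*} (G : SimpleGraph V) (u v : V) (k : ℕ) (x : V) : Prop :=
  G.dist u x + G.dist x v = G.dist u v ∧ G.dist u x = k

/-- Every vertex at positive distance from `u` has a neighbor one step closer to `u`. -/
lemma exists_pred {V : Type*} (G : SimpleGraph V) (u x : V) (h : 0 < G.dist u x) :
    ∃ w, G.Adj w x ∧ G.dist u w + 1 = G.dist u x := by
  obtain ⟨p, hp⟩ := SimpleGraph.exists_walk_of_dist_ne_zero (Nat.pos_iff_ne_zero.mp h)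
  have hq : (p.reverse).length = G.dist u x := by
    rw [SimpleGraph.Walk.length_reverse]; exact hp
  cases hq' : p.reverse with
  | nil =>
    exfalso; rw [hq'] at hq; simp at hq; simp at h
  | cons hadj q =>
    rename_i w
    refine ⟨w, hadj.symm, ?_⟩
    rw [hq'] at hq
    simp [SimpleGraph.Walk.length_cons] at hq
    have h1 : G.dist u w ≤ q.length := by
      rw [SimpleGraph.dist_comm]; exact SimpleGraph.dist_le q
    have h2 : G.dist u x ≤ G.dist u w + 1 := by
      obtain ⟨p1, hp1⟩ := SimpleGraph.Reachable.exists_walk_length_eq_dist ⟨q.reverse⟩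
      have := SimpleGraph.dist_le (p1.concat hadj.symm)
      rwa [SimpleGraph.Walk.length_concat, hp1] at this
    omega

theorem stmt2 {V : Type*} [Fintype V] (G : SimpleGraph V) (hconn : G.Connected)
    (i : ℕ) (halpha : alphaMetric G i) (u v : V) (k : ℕ) (hk : k ≤ G.dist u v)
    (x y : V) (hx : inSlice G u v k x) (hy : inSlice G u v k y) :
    G.dist x y ≤ i + 1 := by
  revert hk hx hy
  revert x y
  induction k with
  | zero =>
    intro x y _ hx hy
    obtain ⟨-, hx2⟩ := hx
    obtain ⟨-, hy2⟩ := hy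
    have hxu : u = x := hconn.dist_eq_zero_iff.mp hx2
    have hyu : u = y := hconn.dist_eq_zero_iff.mp hy2
    subst hxu; subst hyu
    simp [SimpleGraph.dist_self]
  | succ k ih =>
    intro x y hk hx hy
    obtain ⟨hx1, hx2⟩ := hx
    obtain ⟨hy1, hy2⟩ := hy
    by_contra hcon
    push_neg at hcon
    obtain ⟨x', hax, hdx⟩ := exists_pred G u x (by omega)
    obtain ⟨y', hay, hdy⟩ := exists_pred G u y (by omega)
    have e1 : G.dist x' x = 1 := SimpleGraph.dist_eq_one_iff_adj.mpr hax
    have e2 : G.dist y' y = 1 := SimpleGraph.dist_eq_one_iff_adj.mpr hay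
    -- commutativity facts
    have c1 : G.dist y y' = G.dist y' y := SimpleGraph.dist_comm
    have c2 : G.dist y' u = G.dist u y' := SimpleGraph.dist_comm
    have c3 : G.dist y u = G.dist u y := SimpleGraph.dist_comm
    have c4 : G.dist x u = G.dist u x := SimpleGraph.dist_comm
    have c5 : G.dist y' x = G.dist x y' := SimpleGraph.dist_comm
    have c6 : G.dist y' x' = G.dist x' y' := SimpleGraph.dist_comm
    have c7 : G.dist x x' = G.dist x' x := SimpleGraph.dist_comm
    have c8 : G.dist x' u = G.dist u x' := SimpleGraph.dist_comm
    -- triangle inequalities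
    have t1 : G.dist u v ≤ G.dist u x' + G.dist x' v := hconn.dist_triangle
    have t2 : G.dist x' v ≤ G.dist x' x + G.dist x v := hconn.dist_triangle
    have t3 : G.dist u v ≤ G.dist u y' + G.dist y' v := hconn.dist_triangle
    have t4 : G.dist y' v ≤ G.dist y' y + G.dist y v := hconn.dist_triangle
    have t5 : G.dist x y' ≤ G.dist x y + G.dist y y' := hconn.dist_triangle
    have t6 : G.dist x y ≤ G.dist x y' + G.dist y' y := hconn.dist_triangle
    have t7 : G.dist x' y' ≤ G.dist x' x + G.dist x y' := hconn.dist_triangle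
    have t8 : G.dist x y' ≤ G.dist x x' + G.dist x' y' := hconn.dist_triangle
    -- x', y' are in the slice at level k
    have hx'v : G.dist x' v = G.dist x v + 1 := by omega
    have hy'v : G.dist y' v = G.dist y v + 1 := by omega
    have hs1 : inSlice G u v k x' := ⟨by omega, by omega⟩
    have hs2 : inSlice G u v k y' := ⟨by omega, by omega⟩
    have ha : G.dist x y' + 1 = G.dist x y ∨ G.dist x y = G.dist x y'
        ∨ G.dist x y + 1 = G.dist x y' := by omega
    rcases ha with ha | ha | ha
    · -- d(x,y') = d(x,y) - 1 : apply alpha to (x, y', y, v)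
      have A := halpha x y' y v (by omega) (by omega) hay
      omega
    · -- d(x,y') = d(x,y) : now case on d(x',y')
      have hb : G.dist x' y' + 1 = G.dist x y' ∨ G.dist x y' = G.dist x' y'
          ∨ G.dist x y' + 1 = G.dist x' y' := by omega
      rcases hb with hb | hb | hb
      · -- apply alpha to (y', x', x, v)
        have A := halpha y' x' x v (by omega) (by omega) hax
        omega
      · -- both equal : use induction hypothesis on x', y'
        have A := ih x' y' (by omega) hs1 hs2
        omega
      · -- apply alpha to (y', x, x', u)
        have A := halpha y' x x' u (by omega) (by omega) hax.symm
        omega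
    · -- d(x,y') = d(x,y) + 1 : apply alpha to (x, y, y', u)
      have A := halpha x y y' u (by omega) (by omega) hay.symm
      omega
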